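/- arXiv:1512.01358 — 4 statements merged into one kernel-verified Lean document; each statement's English description precedes it below -/
import Mathlib

section
/- Let k be an algebraically closed field of characteristic 2, let Δ₅ ∈ k[t] be squarefree of degree 5, and let a, b ∈ k with a ≠ 0 and gcd(Δ₅, t² + at + b) = 1; put Δ = Δ₅(t)²·(t² + at + b). Then for every root t₀ of t² + at + b one has Δ'(t₀) = Δ₅(t₀)²·a ≠ 0, so the coefficient of (t − t₀) in the Taylor expansion of Δ at t₀ does not vanish. -/
open Polynomial

/-- The arithmetic core ruling out a rational elliptic surface with fibers
5I₂ + 2I₁ in characteristic 2: for Δ = Δ₅²(t² + at + b) with Δ₅ squarefree of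
degree 5, a ≠ 0, and t₀ a root of t²+at+b not a root of Δ₅, the derivative
Δ'(t₀) = Δ₅(t₀)²·a is nonzero, contradicting the supersingularity criterion. -/
theorem no_5I2_2I1_configuration (k : Type*) [Field k] [IsAlgClosed k]
    [CharP k 2] (Δ₅ : k[X]) (hsqfree : Squarefree Δ₅)
    (hdeg : Δ₅.natDegree = 5) (a b : k) (ha : a ≠ 0)
    (hcop : IsCoprime Δ₅ (X ^ 2 + C a * X + C b))
    (t₀ : k) (hroot : t₀ ^ 2 + a * t₀ + b = 0) (h5 : Δ₅.eval t₀ ≠ 0) :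
    (derivative (Δ₅ ^ 2 * (X ^ 2 + C a * X + C b))).eval t₀
      = (Δ₅.eval t₀) ^ 2 * a ∧
    (derivative (Δ₅ ^ 2 * (X ^ 2 + C a * X + C b))).eval t₀ ≠ 0 := by
  have h2 : (2 : k) = 0 := by
    have := CharP.cast_eq_zero k 2; simpa using this
  have key : (derivative (Δ₅ ^ 2 * (X ^ 2 + C a * X + C b))).eval t₀
      = (Δ₅.eval t₀) ^ 2 * a := by
    simp only [derivative_mul, derivative_pow, derivative_add, derivative_X_pow,
      derivative_C_mul, derivative_X, derivative_C, eval_add, eval_mul, eval_pow,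
      eval_X, eval_C, eval_ofNat, eval_natCast, mul_one, add_zero]
    push_cast
    rw [h2]
    ring_nf
    simp
  refine ⟨key, ?_⟩
  rw [key]
  exact mul_ne_zero (pow_ne_zero _ h5) ha
end

section
/- A nonzero univariate polynomial R of degree at most 18 over a field has at most 18 roots counted without multiplicity; moreover, if for each of v lines meeting a fixed line ℓ the polynomial R acquires a distinct root (with fibers containing 3 lines giving roots of multiplicity ≥ 3 and fibers containing 2 lines with double ramification giving multiplicity ≥ 2), then the total number v of such lines is at most 18. -/
open Polynomial

/-- Segre's bound: a nonzero polynomial R of degree at most 18 has at most 18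
distinct roots; in particular, if each of v lines gives rise to a distinct root
of R, then v ≤ 18. -/
theorem segre_valency_bound (K : Type*) [Field K] [DecidableEq K] (R : K[X]) (hR : R ≠ 0)
    (hdeg : R.natDegree ≤ 18) :
    R.roots.toFinset.card ≤ 18 ∧
    ∀ (v : ℕ) (ρ : Fin v → K), Function.Injective ρ →
      (∀ i, R.eval (ρ i) = 0) → v ≤ 18 := by
  have hcard : R.roots.toFinset.card ≤ 18 := by
    calc R.roots.toFinset.card ≤ Multiset.card R.roots := R.roots.toFinset_card_le
      _ ≤ R.natDegree := R.card_roots' 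
      _ ≤ 18 := hdeg
  refine ⟨hcard, fun v ρ hinj hroot => ?_⟩
  have : (Finset.univ.image ρ).card ≤ R.roots.toFinset.card := by
    apply Finset.card_le_card
    intro x hx
    simp only [Finset.mem_image, Finset.mem_univ, true_and] at hx
    obtain ⟨i, rfl⟩ := hx
    simp [Multiset.mem_toFinset, mem_roots, hR, hroot i, IsRoot]
  calc v = (Finset.univ.image ρ).card := by
        rw [Finset.card_image_of_injective _ hinj, Finset.card_univ, Fintype.card_fin]
    _ ≤ R.roots.toFinset.card := this
    _ ≤ 18 := hcard
end

section
/- Let g = Σ a_{ijk} x₁^i x₂^j x₃^k (i+j+k = 3) be the generic homogeneous cubic in three variables over ℤ, with α = a_{111} the coefficient of x₁x₂x₃. Then the polynomial (1/2)·det(∂²g/∂x_i∂x_j)_{1≤i,j≤3} − α²·g has all coefficients divisible by 4 as a polynomial in ℤ[a_{ijk}][x₁,x₂,x₃]; equivalently, det(Hess g) − 2α²g ∈ 8·ℤ[a_{ijk}][x₁,x₂,x₃]. -/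
/-!
Split off the monomial `α x₀x₁x₂`: every other monomial of `g` contributes only even entries to
the Hessian, so `Hess g = 2A + α N`, where `A` is a symmetric matrix of linear forms and `N` is the
Hessian of `x₀x₁x₂`. Expanding the determinant, `det (2A) = 8 det A`, the term linear in `α` is
`4α tr (adj A · N)`, which is even because `adj A` and `N` are symmetric and `N` has zero
diagonal, and `α³ det N = 2α³ x₀x₁x₂` cancels against `2α² g`. What remains of the `α²` term
reduces, by Euler's formula for `A`, to `-8α²` times the pure cubes of `g`.
-/

open MvPolynomial Matrix

/-- The Hessian of `x₀x₁x₂` at `x`. -/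
def crossMatrix {S : Type*} [Zero S] (x : Fin 3 → S) : Matrix (Fin 3) (Fin 3) S :=
  !![0, x 2, x 1; x 2, 0, x 0; x 1, x 0, 0]

/-- The terms come from `det (A + B) = det A + tr (adj A · B) + tr (A · adj B) + det B` for
`3 × 3` matrices, with `B = t N` for `N = crossMatrix x`, `adj N = x xᵀ - 2 diag (x²)` and
`det N = 2 x₀x₁x₂`. -/
theorem det_two_smul_add_smul_crossMatrix {S : Type*} [CommRing S]
    {A : Matrix (Fin 3) (Fin 3) S} (hA : A.IsSymm) (t : S) (x : Fin 3 → S) :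
    det ((2 : S) • A + t • crossMatrix x) =
      8 * (det A + t * (adjugate A 0 1 * x 2 + adjugate A 0 2 * x 1 + adjugate A 1 2 * x 0))
        + 2 * t ^ 2 * (x ⬝ᵥ A *ᵥ x - 2 * ∑ i, A i i * x i ^ 2) + 2 * t ^ 3 * (x 0 * x 1 * x 2) := by
  simp only [crossMatrix, Fin.isValue, smul_of, smul_cons, smul_eq_mul, mul_zero, smul_empty,
    det_fin_three, Matrix.add_apply, Matrix.smul_apply, of_apply, cons_val', cons_val_zero,
    cons_val_fin_one, add_zero, cons_val_one, cons_val, hA.apply, adjugate_fin_three, dotProduct,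
    mulVec, Fin.sum_univ_three]
  ring

@[simp]
lemma MvPolynomial.pderiv_ofNat {σ R : Type*} [CommSemiring R] (i : σ) (n : ℕ) [n.AtLeastTwo] :
    pderiv i (ofNat(n) : MvPolynomial σ R) = 0 :=
  (pderiv i).map_natCast n

namespace TernaryCubic

variable {R : Type*} [CommRing R]

noncomputable def exponent (i j k : ℕ) : Fin 3 →₀ ℕ :=
  Finsupp.single 0 i + Finsupp.single 1 j + Finsupp.single 2 k

@[simp] lemma exponent_apply_zero (i j k : ℕ) : exponent i j k 0 = i := by simp [exponent]

@[simp] lemma exponent_apply_one (i j k : ℕ) : exponent i j k 1 = j := by simp [exponent]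

@[simp] lemma exponent_apply_two (i j k : ℕ) : exponent i j k 2 = k := by simp [exponent]

lemma exponent_inj {i j k i' j' k' : ℕ} :
    exponent i j k = exponent i' j' k' ↔ i = i' ∧ j = j' ∧ k = k' := by
  refine ⟨fun h => ?_, by rintro ⟨rfl, rfl, rfl⟩; rfl⟩
  exact ⟨by simpa using DFunLike.congr_fun h 0, by simpa using DFunLike.congr_fun h 1,
    by simpa using DFunLike.congr_fun h 2⟩

lemma eq_exponent (d : Fin 3 →₀ ℕ) : d = exponent (d 0) (d 1) (d 2) := by
  ext i
  fin_cases i <;> simp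

lemma monomial_exponent (i j k : ℕ) (c : R) :
    monomial (exponent i j k) c = C c * X 0 ^ i * X 1 ^ j * X 2 ^ k := by
  simp only [exponent, X_pow_eq_monomial, C_mul_monomial, monomial_mul, mul_one]

/-- The cubic `∑ a_{ijk} x₀^i x₁^j x₂^k` over `i + j + k = 3`. -/
noncomputable def cubicForm (a : ℕ → ℕ → ℕ → R) : MvPolynomial (Fin 3) R :=
  monomial (exponent 3 0 0) (a 3 0 0) + monomial (exponent 0 3 0) (a 0 3 0)
    + monomial (exponent 0 0 3) (a 0 0 3) + monomial (exponent 2 1 0) (a 2 1 0)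
    + monomial (exponent 2 0 1) (a 2 0 1) + monomial (exponent 1 2 0) (a 1 2 0)
    + monomial (exponent 0 2 1) (a 0 2 1) + monomial (exponent 1 0 2) (a 1 0 2)
    + monomial (exponent 0 1 2) (a 0 1 2) + monomial (exponent 1 1 1) (a 1 1 1)

lemma _root_.MvPolynomial.IsHomogeneous.eq_cubicForm {g : MvPolynomial (Fin 3) R}
    (hg : g.IsHomogeneous 3) : g = cubicForm fun i j k => g.coeff (exponent i j k) := by
  ext d
  obtain ⟨i, j, k, rfl⟩ : ∃ i j k, d = exponent i j k := ⟨_, _, _, eq_exponent d⟩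
  simp only [cubicForm, coeff_add, coeff_monomial, exponent_inj]
  by_cases hd : i + j + k = 3
  · obtain rfl : k = 3 - i - j := by omega
    obtain ⟨hi, hj⟩ : i ≤ 3 ∧ j ≤ 3 := by omega
    interval_cases i <;> interval_cases j <;> first | omega | simp
  · have hne : ∀ a b c, a + b + c = 3 → ¬(a = i ∧ b = j ∧ c = k) := by omega
    rw [hg.coeff_eq_zero (by simpa [Finsupp.degree_eq_sum, Fin.sum_univ_three] using hd)]
    simp [hne]

/-- Half the Hessian of `cubicForm a - a₁₁₁ x₀x₁x₂`. -/
noncomputable def halfHessian (a : ℕ → ℕ → ℕ → R) :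
    Matrix (Fin 3) (Fin 3) (MvPolynomial (Fin 3) R) :=
  let c := fun i j k => C (a i j k)
  let X : Fin 3 → MvPolynomial (Fin 3) R := X
  !![3 * c 3 0 0 * X 0 + c 2 1 0 * X 1 + c 2 0 1 * X 2, c 2 1 0 * X 0 + c 1 2 0 * X 1,
      c 2 0 1 * X 0 + c 1 0 2 * X 2;
    c 2 1 0 * X 0 + c 1 2 0 * X 1, c 1 2 0 * X 0 + 3 * c 0 3 0 * X 1 + c 0 2 1 * X 2,
      c 0 2 1 * X 1 + c 0 1 2 * X 2;
    c 2 0 1 * X 0 + c 1 0 2 * X 2, c 0 2 1 * X 1 + c 0 1 2 * X 2,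
      c 1 0 2 * X 0 + c 0 1 2 * X 1 + 3 * c 0 0 3 * X 2]

noncomputable def pureCubes (a : ℕ → ℕ → ℕ → R) : MvPolynomial (Fin 3) R :=
  C (a 3 0 0) * X 0 ^ 3 + C (a 0 3 0) * X 1 ^ 3 + C (a 0 0 3) * X 2 ^ 3

lemma halfHessian_isSymm (a : ℕ → ℕ → ℕ → R) : (halfHessian a).IsSymm :=
  IsSymm.ext fun i j => by fin_cases i <;> fin_cases j <;> rfl

lemma hessian_cubicForm (a : ℕ → ℕ → ℕ → R) :
    (Matrix.of fun i j : Fin 3 => pderiv i (pderiv j (cubicForm a))) =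
      (2 : MvPolynomial (Fin 3) R) • halfHessian a
        + (C (a 1 1 1) : MvPolynomial (Fin 3) R) • crossMatrix X := by
  ext i j : 1
  fin_cases i <;> fin_cases j <;>
    simp only [cubicForm, monomial_exponent, halfHessian, crossMatrix, pow_zero, pow_one, mul_one,
      mul_zero, zero_add, add_zero, map_add, map_zero, Derivation.leibniz,
      Derivation.leibniz_pow, Nat.add_one_sub_one, derivation_C, pderiv_ofNat, pderiv_X,
      Pi.single_apply, smul_eq_mul, mul_ite, smul_ite, nsmul_eq_mul, Nat.cast_ofNat, of_apply,
      smul_of, smul_cons, smul_empty, Matrix.add_apply, cons_val', cons_val_zero, cons_val_one,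
      cons_val, cons_val_fin_one, Fin.isValue, Fin.zero_eta, Fin.mk_one, Fin.reduceFinMk,
      Fin.reduceEq, zero_ne_one, one_ne_zero, ↓reduceIte] <;> ring

/-- Euler's formula `xᵀ (Hess q) x = 6 q` for the cubic `q = cubicForm a - a₁₁₁ x₀x₁x₂`. -/
lemma dotProduct_mulVec_halfHessian (a : ℕ → ℕ → ℕ → R) :
    (X : Fin 3 → MvPolynomial (Fin 3) R) ⬝ᵥ halfHessian a *ᵥ X
      = 3 * (cubicForm a - C (a 1 1 1) * X 0 * X 1 * X 2) := by
  simp only [cubicForm, monomial_exponent, halfHessian, dotProduct, mulVec, Fin.sum_univ_three,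
    of_apply, cons_val', cons_val_zero, cons_val_one, cons_val, cons_val_fin_one, Fin.isValue]
  ring

lemma sum_halfHessian_mul_sq (a : ℕ → ℕ → ℕ → R) :
    ∑ i, halfHessian a i i * X i ^ 2
      = cubicForm a - C (a 1 1 1) * X 0 * X 1 * X 2 + 2 * pureCubes a := by
  simp only [cubicForm, pureCubes, monomial_exponent, halfHessian, Fin.sum_univ_three, of_apply,
    cons_val', cons_val_zero, cons_val_one, cons_val, cons_val_fin_one, Fin.isValue]
  ring

end TernaryCubic

open TernaryCubic in
/-- For any homogeneous cubic g in three variables (over any commutative ring,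
in particular over the ring of generic coefficients), with α the coefficient of
x₁x₂x₃, one has det(Hess g) - 2α²g ∈ 8·R[x₁,x₂,x₃]; this is the integrality
underlying the modified Hessian h = (1/4)((1/2)det(Hess g) - α²g). -/
theorem hessian_divisibility (R : Type*) [CommRing R]
    (g : MvPolynomial (Fin 3) R) (hg : g.IsHomogeneous 3) :
    ∃ h : MvPolynomial (Fin 3) R,
      (Matrix.of fun i j : Fin 3 => pderiv i (pderiv j g)).det
        - 2 * C (g.coeff (Finsupp.single 0 1 + Finsupp.single 1 1 + Finsupp.single 2 1)) ^ 2 * g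
      = 8 * h := by
  obtain ⟨a, rfl, hα⟩ : ∃ a, g = cubicForm a ∧
      g.coeff (Finsupp.single 0 1 + Finsupp.single 1 1 + Finsupp.single 2 1) = a 1 1 1 :=
    ⟨_, hg.eq_cubicForm, rfl⟩
  set A := halfHessian a
  refine ⟨det A + C (a 1 1 1) * (adjugate A 0 1 * X 2 + adjugate A 0 2 * X 1
      + adjugate A 1 2 * X 0) - C (a 1 1 1) ^ 2 * pureCubes a, ?_⟩
  rw [hα, hessian_cubicForm, det_two_smul_add_smul_crossMatrix (halfHessian_isSymm a),
    dotProduct_mulVec_halfHessian, sum_halfHessian_mul_sq]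
  ring
end

section
/- There do not exist a squarefree polynomial Δ₅ ∈ k[t] of degree 5 over an algebraically closed field k of characteristic 2 and λ ∈ k with Δ₅(λ) ≠ 0, such that the polynomial Δ = Δ₅(t)⁴·(t − λ) has vanishing derivative at every point t₀ ∉ {roots of Δ₅} ∪ {λ}. Concretely: the derivative of Δ₅⁴·(t − λ) equals Δ₅⁴ in characteristic 2, which is nonzero away from the roots of Δ₅, so the supersingularity condition d/dt Δ(t₀) = 0 fails at some smooth supersingular place t₀. -/
open Polynomial

/-- Ruling out the configuration 5I₄ + I₃ + I₁: in characteristic 2, the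
derivative of Δ = Δ₅⁴(t - λ) is Δ₅⁴, which is nonzero away from the roots of
Δ₅; hence the supersingularity condition Δ'(t₀) = 0 fails at some point t₀
which is neither a root of Δ₅ nor equal to λ. -/
theorem no_5I4_I3_I1_configuration (k : Type*) [Field k] [IsAlgClosed k]
    [CharP k 2] (Δ₅ : k[X]) (hsqfree : Squarefree Δ₅)
    (hdeg : Δ₅.natDegree = 5) (l : k) (hl : Δ₅.eval l ≠ 0) :
    derivative (Δ₅ ^ 4 * (X - C l)) = Δ₅ ^ 4 ∧
    ¬ ∀ t₀ : k, Δ₅.eval t₀ ≠ 0 → t₀ ≠ l →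
        (derivative (Δ₅ ^ 4 * (X - C l))).eval t₀ = 0 := by
  have h2k : (2 : k) = 0 := by simpa using CharP.cast_eq_zero k 2
  have h4 : (4 : k[X]) = 0 := by
    rw [show (4 : k[X]) = C (4 : k) from (map_ofNat C 4).symm,
      show (4 : k) = 2 * 2 by norm_num, h2k, zero_mul, map_zero]
  have hder : derivative (Δ₅ ^ 4 * (X - C l)) = Δ₅ ^ 4 := by
    rw [derivative_mul, derivative_pow, derivative_sub, derivative_X, derivative_C]
    simp [h4]
    exact Or.inl (Or.inl (Or.inl (by rw [show (4 : k) = 2 * 2 by norm_num, h2k, zero_mul])))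
  refine ⟨hder, ?_⟩
  intro h
  have hΔ : Δ₅ ≠ 0 := fun h0 => by simp [h0] at hdeg
  have hfin : ({x : k | Δ₅.eval x = 0} ∪ {l}).Finite :=
    (Δ₅.finite_setOf_isRoot hΔ).union (Set.finite_singleton l)
  obtain ⟨t₀, ht₀⟩ := (hfin.infinite_compl).nonempty
  simp only [Set.mem_compl_iff, Set.mem_union, Set.mem_setOf_eq, Set.mem_singleton_iff,
    not_or] at ht₀
  have := h t₀ ht₀.1 ht₀.2
  rw [hder] at this
  simp only [eval_pow] at this
  exact ht₀.1 (pow_eq_zero_iff (by norm_num) |>.mp this)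
end
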